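/- arXiv:1804.08800 — 3 statements merged into one kernel-verified Lean document; each statement's English description precedes it below -/
import Mathlib

section
/- The function Ψ(z) = (1/(2π)) ∫_{-∞}^{0} log(1 + z e^{v}) √(-v) dv equals -(1/√(16π)) · Li_{5/2}(-z) for all real z > -1, where Li_{5/2} is the polylogarithm of order 5/2. -/
/-!
After `v = -t` the left side is `∫₀^∞ log (1 + z e^{-t}) t^{1/2} dt`, and one integration by
parts against `(2/3) t^{3/2}` turns it into `(2/3) ∫₀^∞ t^{3/2} z e^{-t} / (1 + z e^{-t}) dt`, the
integral defining `Li52neg`. For `z > -1` we have `1 + z e^{-t} ≥ min 1 (1 + z) > 0` on `t ≥ 0`, so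
`log (1 + z e^{-t})` and `z e^{-t} / (1 + z e^{-t})` are `O(e^{-t})`: this makes both integrals
converge and kills the boundary terms. The constants match through `Γ(5/2) = 3√π/4`.
-/

open Real MeasureTheory

/-- The polylogarithm of order 5/2 evaluated at `-z`, defined via its integral
representation `Li_{5/2}(-z) = -(1/Γ(5/2)) ∫_0^∞ t^{3/2} z e^{-t}/(1+z e^{-t}) dt`,
valid for `z > -1` by analytic continuation. -/
noncomputable def Li52neg (z : ℝ) : ℝ :=
  -(1 / Real.Gamma (5/2)) *
    ∫ t in Set.Ioi (0:ℝ), t ^ ((3:ℝ)/2) * z * Real.exp (-t) / (1 + z * Real.exp (-t))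

open Set Filter Topology

lemma Real.Gamma_five_halves : Gamma (5 / 2) = 3 * √π / 4 := by
  have h := Gamma_nat_add_half 2
  norm_num [Nat.doubleFactorial] at h
  exact h

lemma abs_log_one_add_le {x m : ℝ} (hm : 0 < m) (hm₁ : m ≤ 1) (hx : m ≤ 1 + x) :
    |log (1 + x)| ≤ |x| / m := by
  have hx₀ : 0 < 1 + x := hm.trans_le hx
  rw [abs_le]
  constructor
  · calc -(|x| / m) ≤ -(|x| / (1 + x)) :=
          neg_le_neg (div_le_div_of_nonneg_left (abs_nonneg x) hm hx)
      _ ≤ x / (1 + x) := by rw [← neg_div]; exact div_le_div_of_nonneg_right (neg_abs_le x) hx₀.le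
      _ = 1 - (1 + x)⁻¹ := by field_simp; ring
      _ ≤ log (1 + x) := one_sub_inv_le_log_of_pos hx₀
  · calc log (1 + x) ≤ x := by linarith [log_le_sub_one_of_pos hx₀]
      _ ≤ |x| := le_abs_self x
      _ ≤ |x| / m := le_div_self (abs_nonneg x) hm hm₁

lemma abs_div_one_add_le {x m : ℝ} (hm : 0 < m) (hx : m ≤ 1 + x) :
    |x / (1 + x)| ≤ |x| / m := by
  rw [abs_div, abs_of_pos (hm.trans_le hx)]
  exact div_le_div_of_nonneg_left (abs_nonneg x) hm hx

lemma integrableOn_Ioi_mul_rpow_of_abs_le_mul_exp_neg {f : ℝ → ℝ} {C s : ℝ} (hs : -1 < s)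
    (hf : ContinuousOn f (Ioi 0)) (hbound : ∀ t, 0 < t → |f t| ≤ C * exp (-t)) :
    IntegrableOn (fun t => f t * t ^ s) (Ioi 0) := by
  have hgamma : IntegrableOn (fun t : ℝ => exp (-t) * t ^ s) (Ioi 0) := by
    simpa using GammaIntegral_convergent (s := s + 1) (by linarith)
  refine (hgamma.const_mul C).mono' ?_ ?_
  · refine (hf.mul fun t ht => ?_).aestronglyMeasurable measurableSet_Ioi
    exact (continuousAt_rpow_const t s (Or.inl (ne_of_gt ht))).continuousWithinAt
  · filter_upwards [ae_restrict_mem measurableSet_Ioi] with t ht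
    rw [norm_mul, norm_eq_abs, norm_of_nonneg (rpow_nonneg (le_of_lt ht) s), ← mul_assoc]
    exact mul_le_mul_of_nonneg_right (hbound t ht) (rpow_nonneg (le_of_lt ht) s)

section
variable {z t : ℝ}

lemma min_one_one_add_le_one_add_mul_exp_neg (ht : 0 ≤ t) :
    min 1 (1 + z) ≤ 1 + z * exp (-t) := by
  have he₁ : exp (-t) ≤ 1 := exp_le_one_iff.2 (neg_nonpos.2 ht)
  nlinarith [min_le_left 1 (1 + z), min_le_right 1 (1 + z), exp_pos (-t)]

lemma one_add_mul_exp_neg_pos (hz : -1 < z) (ht : 0 ≤ t) : 0 < 1 + z * exp (-t) :=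
  (lt_min one_pos (by linarith)).trans_le (min_one_one_add_le_one_add_mul_exp_neg (z := z) ht)

lemma abs_log_one_add_mul_exp_neg_le (hz : -1 < z) (ht : 0 ≤ t) :
    |log (1 + z * exp (-t))| ≤ |z| / min 1 (1 + z) * exp (-t) := by
  have h := abs_log_one_add_le (lt_min one_pos (by linarith)) (min_le_left _ _)
    (min_one_one_add_le_one_add_mul_exp_neg (z := z) ht)
  rwa [abs_mul, abs_of_pos (exp_pos _), mul_div_right_comm] at h

lemma abs_mul_exp_neg_div_one_add_le (hz : -1 < z) (ht : 0 ≤ t) :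
    |z * exp (-t) / (1 + z * exp (-t))| ≤ |z| / min 1 (1 + z) * exp (-t) := by
  have h := abs_div_one_add_le (lt_min one_pos (by linarith))
    (min_one_one_add_le_one_add_mul_exp_neg (z := z) ht)
  exact h.trans_eq (by rw [abs_mul, abs_of_pos (exp_pos _), mul_div_right_comm])

lemma hasDerivAt_log_one_add_mul_exp_neg (hz : -1 < z) (ht : 0 ≤ t) :
    HasDerivAt (fun t => log (1 + z * exp (-t))) (-(z * exp (-t) / (1 + z * exp (-t)))) t := by
  convert ((((hasDerivAt_neg t).exp).const_mul z).const_add 1).log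
    (one_add_mul_exp_neg_pos hz ht).ne' using 1
  ring

lemma tendsto_log_one_add_mul_exp_neg_mul_rpow_atTop (hz : -1 < z) (p : ℝ) :
    Tendsto (fun t => log (1 + z * exp (-t)) * t ^ p) atTop (𝓝 0) := by
  set C := |z| / min 1 (1 + z)
  refine squeeze_zero_norm' (a := fun t => C * (t ^ p * exp (-1 * t))) ?_ ?_
  · filter_upwards [eventually_ge_atTop 0] with t ht
    rw [norm_mul, norm_eq_abs, norm_of_nonneg (rpow_nonneg ht p), neg_one_mul, mul_comm (t ^ p),
      ← mul_assoc]
    exact mul_le_mul_of_nonneg_right (abs_log_one_add_mul_exp_neg_le hz ht) (rpow_nonneg ht p)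
  · simpa using (tendsto_rpow_mul_exp_neg_mul_atTop_nhds_zero p 1 one_pos).const_mul C

theorem integral_log_one_add_mul_exp_neg_mul_rpow {s : ℝ} (hz : -1 < z) (hs : -1 < s) :
    ∫ t in Ioi 0, log (1 + z * exp (-t)) * t ^ s =
      (s + 1)⁻¹ * ∫ t in Ioi 0, t ^ (s + 1) * z * exp (-t) / (1 + z * exp (-t)) := by
  set u : ℝ → ℝ := fun t => log (1 + z * exp (-t))
  set u' : ℝ → ℝ := fun t => -(z * exp (-t) / (1 + z * exp (-t)))
  set v : ℝ → ℝ := fun t => t ^ (s + 1) / (s + 1)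
  have hs₁ : 0 < s + 1 := by linarith
  have hu : ∀ t ∈ Ioi (0 : ℝ), HasDerivAt u (u' t) t := fun t ht =>
    hasDerivAt_log_one_add_mul_exp_neg hz (le_of_lt ht)
  have hv : ∀ t ∈ Ioi (0 : ℝ), HasDerivAt v (t ^ s) t := by
    intro t ht
    refine ((hasDerivAt_rpow_const (Or.inl (ne_of_gt ht))).div_const _).congr_deriv ?_
    rw [add_sub_cancel_right, mul_div_cancel_left₀ _ hs₁.ne']
  have huv' : IntegrableOn (fun t => u t * t ^ s) (Ioi 0) :=
    integrableOn_Ioi_mul_rpow_of_abs_le_mul_exp_neg hs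
      (fun t ht => (hu t ht).continuousAt.continuousWithinAt)
      (fun t ht => abs_log_one_add_mul_exp_neg_le hz (le_of_lt ht))
  have hu'v : IntegrableOn (fun t => u' t * v t) (Ioi 0) := by
    have h := integrableOn_Ioi_mul_rpow_of_abs_le_mul_exp_neg
      (f := fun t => z * exp (-t) / (1 + z * exp (-t))) (by linarith : -1 < s + 1)
      (.div (by fun_prop) (by fun_prop) fun t ht => (one_add_mul_exp_neg_pos hz (le_of_lt ht)).ne')
      (fun t ht => abs_mul_exp_neg_div_one_add_le hz (le_of_lt ht))
    refine IntegrableOn.congr_fun (h.const_mul (-(s + 1)⁻¹)) (fun t _ => ?_) measurableSet_Ioi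
    simp only [u', v]
    ring
  have h_zero : Tendsto (u * v) (𝓝[>] 0) (𝓝 0) := by
    have hv_cont : ContinuousAt v 0 :=
      (continuousAt_rpow_const 0 _ (Or.inr hs₁.le)).div_const _
    have h := ((hasDerivAt_log_one_add_mul_exp_neg hz le_rfl).continuousAt.mul hv_cont).tendsto
    simp only [Pi.mul_apply, v, zero_rpow hs₁.ne', zero_div, mul_zero] at h
    exact h.mono_left nhdsWithin_le_nhds
  have h_infty : Tendsto (u * v) atTop (𝓝 0) := by
    convert (tendsto_log_one_add_mul_exp_neg_mul_rpow_atTop hz (s + 1)).div_const (s + 1) using 1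
    · ext t
      simp only [Pi.mul_apply, u, v, mul_div_assoc]
    · rw [zero_div]
  rw [integral_Ioi_mul_deriv_eq_deriv_mul hu hv huv' hu'v h_zero h_infty, ← integral_const_mul,
    sub_self, zero_sub, ← integral_neg]
  congr 1 with t
  simp only [u', v]
  ring
end

lemma sqrt_sixteen_mul_pi : √(16 * π) = 4 * √π := by
  rw [sqrt_mul (by norm_num), show (16 : ℝ) = 4 ^ 2 by norm_num, sqrt_sq (by norm_num)]

/-- Ψ(z) = (1/(2π)) ∫_{-∞}^0 log(1 + z e^v) √(-v) dv = -(1/√(16π)) Li_{5/2}(-z)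
for all real z > -1. -/
theorem psi_eq_polylog (z : ℝ) (hz : -1 < z) :
    (1 / (2 * π)) * ∫ v in Set.Iic (0:ℝ), Real.log (1 + z * Real.exp v) * Real.sqrt (-v) =
      -(1 / Real.sqrt (16 * π)) * Li52neg z := by
  have h_reflect : ∫ v in Iic (0 : ℝ), log (1 + z * exp v) * √(-v) =
      ∫ t in Ioi 0, log (1 + z * exp (-t)) * t ^ (1 / 2 : ℝ) := by
    simpa only [neg_neg, neg_zero, sqrt_eq_rpow] using
      (integral_comp_neg_Ioi 0 fun v => log (1 + z * exp v) * √(-v)).symm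
  rw [h_reflect, integral_log_one_add_mul_exp_neg_mul_rpow hz (by norm_num), Li52neg,
    Gamma_five_halves, sqrt_sixteen_mul_pi, show (1 / 2 : ℝ) + 1 = 3 / 2 by norm_num]
  set I := ∫ t in Ioi (0 : ℝ), t ^ (3 / 2 : ℝ) * z * exp (-t) / (1 + z * exp (-t))
  have hπ : √π ^ 2 = π := sq_sqrt pi_pos.le
  field_simp
  rw [hπ, mul_comm]
end

section
/- With the substitution y = -W(-e^v) applied to each branch of the Lambert function, one has (1/(2π)) ∫_{-∞}^{-1} log(1 + z e^v)(√(-W_{-1}(-e^v)) - √(-W_0(-e^v))) dv = (1/(2π)) ∫_0^∞ (1 - 1/y) log(1 + z y e^{-y}) √y dy, for all real z ≥ 0. -/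
/-!
Put `v = log y - y`, i.e. `y e^{-y} = e^v`. The map `y ↦ log y - y` increases from `-∞` to `-1`
on `(0, 1]` and decreases from `-1` to `-∞` on `[1, ∞)`, and the two branches invert it there:
`-W_0(-e^v)` is the preimage in `(0, 1]` and `-W_{-1}(-e^v)` the one in `[1, ∞)`. Since
`dv = (1/y - 1) dy`, the `W_{-1}` term becomes the integral over `[1, ∞)` and the `W_0` term,
whose Jacobian `1/y - 1` has the opposite sign, becomes the integral over `(0, 1]`; together they
cover `(0, ∞)`.
-/

open Real Set MeasureTheory

noncomputable def logSubSelf (y : ℝ) : ℝ := log y - y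

lemma hasDerivAt_logSubSelf {y : ℝ} (hy : y ≠ 0) : HasDerivAt logSubSelf (y⁻¹ - 1) y :=
  (hasDerivAt_log hy).sub (hasDerivAt_id y)

lemma continuousOn_logSubSelf : ContinuousOn logSubSelf (Ioi 0) := fun _ hy =>
  (hasDerivAt_logSubSelf (ne_of_gt hy)).continuousAt.continuousWithinAt

lemma logSubSelf_one : logSubSelf 1 = -1 := by simp [logSubSelf]

lemma exp_logSubSelf {y : ℝ} (hy : 0 < y) : exp (logSubSelf y) = y * exp (-y) := by
  rw [logSubSelf, exp_sub, exp_log hy, exp_neg, div_eq_mul_inv]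

lemma logSubSelf_le_neg_one {y : ℝ} (hy : 0 < y) : logSubSelf y ≤ -1 := by
  have := log_le_sub_one_of_pos hy
  rw [logSubSelf]
  linarith

lemma strictMonoOn_logSubSelf : StrictMonoOn logSubSelf (Ioc 0 1) := by
  refine strictMonoOn_of_deriv_pos (convex_Ioc 0 1)
    (continuousOn_logSubSelf.mono Ioc_subset_Ioi_self) fun y hy => ?_
  rw [interior_Ioc] at hy
  rw [(hasDerivAt_logSubSelf hy.1.ne').deriv, sub_pos, one_lt_inv₀ hy.1]
  exact hy.2

lemma strictAntiOn_logSubSelf : StrictAntiOn logSubSelf (Ici 1) := by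
  refine strictAntiOn_of_deriv_neg (convex_Ici 1)
    (continuousOn_logSubSelf.mono (Ici_subset_Ioi.2 zero_lt_one)) fun y hy => ?_
  rw [interior_Ici] at hy
  have hy0 : 0 < y := zero_lt_one.trans hy
  rw [(hasDerivAt_logSubSelf hy0.ne').deriv, sub_neg, inv_lt_one₀ hy0]
  exact hy

lemma logSubSelf_image_Ioc : logSubSelf '' Ioc 0 1 = Iic (-1) := by
  refine Subset.antisymm (image_subset_iff.2 fun y hy => logSubSelf_le_neg_one hy.1) fun v hv => ?_
  have hcont : ContinuousOn logSubSelf (Icc (exp v) 1) :=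
    continuousOn_logSubSelf.mono fun y hy => (exp_pos v).trans_le hy.1
  have hv_mem : v ∈ Icc (logSubSelf (exp v)) (logSubSelf 1) := by
    rw [logSubSelf, log_exp, logSubSelf_one]
    exact ⟨by linarith [exp_pos v], hv⟩
  obtain ⟨y, hy, rfl⟩ :=
    intermediate_value_Icc (exp_le_one_iff.2 (hv.trans (by norm_num))) hcont hv_mem
  exact ⟨y, ⟨(exp_pos _).trans_le hy.1, hy.2⟩, rfl⟩

lemma logSubSelf_image_Ici : logSubSelf '' Ici 1 = Iic (-1) := by
  refine Subset.antisymm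
    (image_subset_iff.2 fun y hy => logSubSelf_le_neg_one (zero_lt_one.trans_le hy))
    fun v hv => ?_
  have hcont : ContinuousOn logSubSelf (Icc 1 (exp (-v))) :=
    continuousOn_logSubSelf.mono fun y hy => zero_lt_one.trans_le hy.1
  -- `e^x ≥ 1 + x + x²/2 ≥ 2x` with `x = -v` gives `log y - y ≤ v` at `y = e^{-v}`.
  have hv_mem : v ∈ Icc (logSubSelf (exp (-v))) (logSubSelf 1) := by
    rw [logSubSelf, log_exp, logSubSelf_one]
    have := quadratic_le_exp_of_nonneg (x := -v) (by linarith [mem_Iic.1 hv])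
    exact ⟨by nlinarith, hv⟩
  obtain ⟨y, hy, rfl⟩ :=
    intermediate_value_Icc' (one_le_exp (by linarith [mem_Iic.1 hv])) hcont hv_mem
  exact ⟨y, hy.1, rfl⟩

lemma neg_exp_logSubSelf_mem {y : ℝ} (hy : 0 < y) :
    -exp (logSubSelf y) ∈ Ico (-exp (-1)) 0 :=
  ⟨neg_le_neg (exp_le_exp.2 (logSubSelf_le_neg_one hy)), neg_lt_zero.2 (exp_pos _)⟩

lemma branch_neg_exp_logSubSelf {W : ℝ → ℝ} {s : Set ℝ} (hs : s ⊆ Ioi 0)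
    (hinj : InjOn logSubSelf s)
    (hW : ∀ x ∈ Ico (-exp (-1)) 0, W x * exp (W x) = x ∧ -W x ∈ s)
    ⦃y : ℝ⦄ (hy : y ∈ s) : W (-exp (logSubSelf y)) = -y := by
  obtain ⟨hWx, hWs⟩ := hW _ (neg_exp_logSubSelf_mem (hs hy))
  refine neg_eq_iff_eq_neg.1 (hinj hWs hy (exp_injective ?_))
  rw [exp_logSubSelf (hs hWs), neg_neg, neg_mul, hWx, neg_neg]

noncomputable def lambertIntegrand (z y : ℝ) : ℝ := (1 - 1 / y) * log (1 + z * y * exp (-y)) * √y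

noncomputable def branchIntegrand (z : ℝ) (W : ℝ → ℝ) (v : ℝ) : ℝ :=
  log (1 + z * exp v) * √(-W (-exp v))

lemma integrableOn_add_one_mul_sqrt_mul_exp_neg :
    IntegrableOn (fun y => (y + 1) * √y * exp (-y)) (Ioi 0) := by
  refine ((GammaIntegral_convergent (s := 5 / 2) (by norm_num)).add
    (GammaIntegral_convergent (s := 3 / 2) (by norm_num))).congr_fun
    (fun y (hy : 0 < y) => ?_) measurableSet_Ioi
  have h5 : (5 / 2 : ℝ) - 1 = 1 + 1 / 2 := by norm_num
  have h3 : (3 / 2 : ℝ) - 1 = 1 / 2 := by norm_num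
  show exp (-y) * y ^ ((5 / 2 : ℝ) - 1) + exp (-y) * y ^ ((3 / 2 : ℝ) - 1) = _
  rw [h5, h3, rpow_add hy, rpow_one, ← sqrt_eq_rpow]
  ring

lemma norm_lambertIntegrand_le {z y : ℝ} (hz : 0 ≤ z) (hy : 0 < y) :
    ‖lambertIntegrand z y‖ ≤ z * ((y + 1) * √y * exp (-y)) := by
  have ht : 0 ≤ z * y * exp (-y) := by positivity
  have hlog : log (1 + z * y * exp (-y)) ≤ z * y * exp (-y) := by
    linarith [log_le_sub_one_of_pos (show 0 < 1 + z * y * exp (-y) by linarith)]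
  have habs : |1 - 1 / y| * y = |y - 1| := by
    rw [← abs_of_pos hy, ← abs_mul, abs_of_pos hy, sub_mul, one_div, inv_mul_cancel₀ hy.ne',
      one_mul]
  calc ‖lambertIntegrand z y‖
      = |1 - 1 / y| * log (1 + z * y * exp (-y)) * √y := by
        rw [lambertIntegrand, norm_mul, norm_mul, norm_of_nonneg (log_nonneg (by linarith)),
          norm_of_nonneg (sqrt_nonneg y), norm_eq_abs]
    _ ≤ |1 - 1 / y| * (z * y * exp (-y)) * √y := by gcongr
    _ = z * (|y - 1| * √y * exp (-y)) := by rw [← habs]; ring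
    _ ≤ z * ((y + 1) * √y * exp (-y)) := by
        gcongr
        exact abs_sub_le_iff.2 ⟨by linarith, by linarith⟩

lemma integrableOn_lambertIntegrand {z : ℝ} (hz : 0 ≤ z) :
    IntegrableOn (lambertIntegrand z) (Ioi 0) := by
  refine (integrableOn_add_one_mul_sqrt_mul_exp_neg.const_mul z).mono' ?_
    ((ae_restrict_iff' measurableSet_Ioi).2
      (ae_of_all _ fun _ hy => norm_lambertIntegrand_le hz hy))
  exact Measurable.aestronglyMeasurable (by unfold lambertIntegrand; fun_prop)

section Branch

-- `c = ±1` is the sign of the Jacobian `1/y - 1` on `s`.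
variable {z c : ℝ} {W : ℝ → ℝ} {s : Set ℝ} (hs : MeasurableSet s) (hs0 : s ⊆ Ioi 0)
  (hinj : InjOn logSubSelf s) (hW : ∀ y ∈ s, W (-exp (logSubSelf y)) = -y)
  (hc : ∀ y ∈ s, |y⁻¹ - 1| = c * (1 - 1 / y))
include hs0 hW hc

lemma eqOn_abs_deriv_mul_branchIntegrand_logSubSelf :
    EqOn (fun y => |y⁻¹ - 1| * branchIntegrand z W (logSubSelf y))
      (fun y => c * lambertIntegrand z y) s := fun y hy => by
  dsimp only [branchIntegrand, lambertIntegrand]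
  rw [hW y hy, exp_logSubSelf (hs0 hy), neg_neg, hc y hy, ← mul_assoc z y]
  ring

include hs hinj

lemma integral_branchIntegrand_logSubSelf_image :
    ∫ v in logSubSelf '' s, branchIntegrand z W v = c * ∫ y in s, lambertIntegrand z y := by
  rw [integral_image_eq_integral_abs_deriv_smul hs
    (fun _ hy => (hasDerivAt_logSubSelf (hs0 hy).ne').hasDerivWithinAt) hinj, ← integral_const_mul]
  exact setIntegral_congr_fun hs (eqOn_abs_deriv_mul_branchIntegrand_logSubSelf hs0 hW hc)

lemma integrableOn_branchIntegrand_logSubSelf_image (h : IntegrableOn (lambertIntegrand z) s) :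
    IntegrableOn (branchIntegrand z W) (logSubSelf '' s) := by
  rw [integrableOn_image_iff_integrableOn_abs_deriv_smul hs
    (fun _ hy => (hasDerivAt_logSubSelf (hs0 hy).ne').hasDerivWithinAt) hinj]
  exact IntegrableOn.congr_fun (h.const_mul c)
    (eqOn_abs_deriv_mul_branchIntegrand_logSubSelf hs0 hW hc).symm hs

end Branch

lemma abs_inv_sub_one_of_mem_Ioc {y : ℝ} (hy : y ∈ Ioc 0 1) : |y⁻¹ - 1| = -1 * (1 - 1 / y) := by
  rw [abs_of_nonneg (sub_nonneg.2 ((one_le_inv₀ hy.1).2 hy.2))]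
  ring

lemma abs_inv_sub_one_of_one_le {y : ℝ} (hy : 1 ≤ y) : |y⁻¹ - 1| = 1 * (1 - 1 / y) := by
  rw [abs_of_nonpos (sub_nonpos.2 (inv_le_one_of_one_le₀ hy))]
  ring

section PrincipalBranch

variable {W : ℝ → ℝ} (hW : ∀ x ∈ Ico (-exp (-1)) 0, W x * exp (W x) = x ∧ W x ∈ Ico (-1) 0)
include hW

lemma principalBranch_neg_exp_logSubSelf : ∀ y ∈ Ioc 0 1, W (-exp (logSubSelf y)) = -y :=
  branch_neg_exp_logSubSelf Ioc_subset_Ioi_self strictMonoOn_logSubSelf.injOn fun x hx =>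
    ⟨(hW x hx).1, neg_pos.2 (hW x hx).2.2, neg_le.1 (hW x hx).2.1⟩

lemma integral_branchIntegrand_principalBranch (z : ℝ) :
    ∫ v in Iic (-1), branchIntegrand z W v = -∫ y in Ioc 0 1, lambertIntegrand z y := by
  rw [← logSubSelf_image_Ioc, integral_branchIntegrand_logSubSelf_image measurableSet_Ioc
    Ioc_subset_Ioi_self strictMonoOn_logSubSelf.injOn (principalBranch_neg_exp_logSubSelf hW)
    fun _ => abs_inv_sub_one_of_mem_Ioc, neg_one_mul]

lemma integrableOn_branchIntegrand_principalBranch {z : ℝ}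
    (h : IntegrableOn (lambertIntegrand z) (Ioc 0 1)) :
    IntegrableOn (branchIntegrand z W) (Iic (-1)) := by
  rw [← logSubSelf_image_Ioc]
  exact integrableOn_branchIntegrand_logSubSelf_image measurableSet_Ioc Ioc_subset_Ioi_self
    strictMonoOn_logSubSelf.injOn (principalBranch_neg_exp_logSubSelf hW)
    (fun _ => abs_inv_sub_one_of_mem_Ioc) h

end PrincipalBranch

section LowerBranch

variable {W : ℝ → ℝ} (hW : ∀ x ∈ Ico (-exp (-1)) 0, W x * exp (W x) = x ∧ W x ≤ -1)
include hW

lemma lowerBranch_neg_exp_logSubSelf : ∀ y ∈ Ici 1, W (-exp (logSubSelf y)) = -y :=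
  branch_neg_exp_logSubSelf (Ici_subset_Ioi.2 zero_lt_one) strictAntiOn_logSubSelf.injOn fun x hx =>
    ⟨(hW x hx).1, le_neg.1 (hW x hx).2⟩

lemma integral_branchIntegrand_lowerBranch (z : ℝ) :
    ∫ v in Iic (-1), branchIntegrand z W v = ∫ y in Ici 1, lambertIntegrand z y := by
  rw [← logSubSelf_image_Ici, integral_branchIntegrand_logSubSelf_image measurableSet_Ici
    (Ici_subset_Ioi.2 zero_lt_one) strictAntiOn_logSubSelf.injOn (lowerBranch_neg_exp_logSubSelf hW)
    fun _ => abs_inv_sub_one_of_one_le, one_mul]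

lemma integrableOn_branchIntegrand_lowerBranch {z : ℝ}
    (h : IntegrableOn (lambertIntegrand z) (Ici 1)) :
    IntegrableOn (branchIntegrand z W) (Iic (-1)) := by
  rw [← logSubSelf_image_Ici]
  exact integrableOn_branchIntegrand_logSubSelf_image measurableSet_Ici
    (Ici_subset_Ioi.2 zero_lt_one)
    strictAntiOn_logSubSelf.injOn (lowerBranch_neg_exp_logSubSelf hW)
    (fun _ => abs_inv_sub_one_of_one_le) h

end LowerBranch

/-- Under the substitution `y = -W(-e^v)` applied to each real branch of the
Lambert W function (`W_0` with range `[-1,0)` and `W_{-1}` with range `(-∞,-1]`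
on `[-1/e, 0)`), one has for all real `z ≥ 0`:
`(1/(2π)) ∫_{-∞}^{-1} log(1+z e^v)(√(-W_{-1}(-e^v)) - √(-W_0(-e^v))) dv
  = (1/(2π)) ∫_0^∞ (1 - 1/y) log(1 + z y e^{-y}) √y dy`. -/
theorem lambert_substitution (W0 Wm1 : ℝ → ℝ)
    (hW0 : ∀ x ∈ Ico (-Real.exp (-1)) (0:ℝ), W0 x * Real.exp (W0 x) = x ∧ W0 x ∈ Ico (-1:ℝ) 0)
    (hWm1 : ∀ x ∈ Ico (-Real.exp (-1)) (0:ℝ), Wm1 x * Real.exp (Wm1 x) = x ∧ Wm1 x ≤ -1)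
    (z : ℝ) (hz : 0 ≤ z) :
    (1 / (2 * π)) * ∫ v in Iic (-1 : ℝ), Real.log (1 + z * Real.exp v) *
        (Real.sqrt (-(Wm1 (-Real.exp v))) - Real.sqrt (-(W0 (-Real.exp v)))) =
      (1 / (2 * π)) *
        ∫ y in Ioi (0:ℝ), (1 - 1/y) * Real.log (1 + z * y * Real.exp (-y)) * Real.sqrt y := by
  congr 1
  have hf := integrableOn_lambertIntegrand hz
  have hf0 : IntegrableOn (lambertIntegrand z) (Ioc 0 1) := hf.mono_set Ioc_subset_Ioi_self
  have hf1 : IntegrableOn (lambertIntegrand z) (Ici 1) := hf.mono_set (Ici_subset_Ioi.2 one_pos)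
  calc ∫ v in Iic (-1), log (1 + z * exp v) * (√(-Wm1 (-exp v)) - √(-W0 (-exp v)))
      = (∫ v in Iic (-1), branchIntegrand z Wm1 v) - ∫ v in Iic (-1), branchIntegrand z W0 v := by
        rw [← integral_sub (integrableOn_branchIntegrand_lowerBranch hWm1 hf1)
          (integrableOn_branchIntegrand_principalBranch hW0 hf0)]
        simp only [branchIntegrand, mul_sub]
    _ = (∫ y in Ioc 0 1, lambertIntegrand z y) + ∫ y in Ioi 1, lambertIntegrand z y := by
        rw [integral_branchIntegrand_lowerBranch hWm1, integral_branchIntegrand_principalBranch hW0,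
          integral_Ici_eq_integral_Ioi, sub_neg_eq_add, add_comm]
    _ = ∫ y in Ioi 0, lambertIntegrand z y := by
        rw [← setIntegral_union Ioc_disjoint_Ioi_same measurableSet_Ioi hf0
          (hf1.mono_set Ioi_subset_Ici_self), Ioc_union_Ioi_eq_Ioi zero_le_one]
end

section
/- Let ρ: (-∞, 0] → ℝ be ρ(a) = √(-a)/(2π) and define Ψ(z) = ∫_{-∞}^0 log(1 + z e^a) ρ(a) da for z ≥ 0. Then Ψ(z) / (log z)^{5/2} → 2/(15π) as z → ∞. -/
open Real Set MeasureTheory Filter Topology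

/-! Substituting `a = -t` and `L = log z` turns `Ψ(z)` into
`(2π)⁻¹ ∫_{t > 0} log (1 + e^(L - t)) √t dt`. Since `log (1 + e^u)` differs from `max u 0` by at
most `e^(-|u|)`, this integral differs from `∫_0^L (L - t) √t dt = 4/15 L^(5/2)` by at most
`∫_ℝ e^(-|t - L|) (1 + L + |t - L|) dt = 2L + 4`, which is negligible against `L^(5/2)`. -/

lemma abs_log_one_add_exp_sub_max_le (u : ℝ) :
    |log (1 + exp u) - max u 0| ≤ exp (-|u|) := by
  have bounds (v : ℝ) : 0 ≤ log (1 + exp v) ∧ log (1 + exp v) ≤ exp v :=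
    ⟨log_nonneg (by linarith [exp_pos v]),
      by linarith [log_le_sub_one_of_pos (x := 1 + exp v) (by positivity)]⟩
  rcases le_or_gt u 0 with hu | hu
  · rw [max_eq_right hu, abs_of_nonpos hu, neg_neg, sub_zero, abs_of_nonneg (bounds u).1]
    exact (bounds u).2
  · have hshift : log (1 + exp u) = u + log (1 + exp (-u)) := by
      rw [← log_exp u, ← log_mul (exp_ne_zero u) (by positivity), log_exp, mul_add, mul_one,
        ← exp_add, add_neg_cancel, exp_zero, add_comm]
    rw [max_eq_left hu.le, abs_of_pos hu, hshift, add_sub_cancel_left,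
      abs_of_nonneg (bounds _).1]
    exact (bounds _).2

lemma IntegrableOn.integrable_comp_abs {f : ℝ → ℝ} (hf : IntegrableOn f (Ioi 0)) :
    Integrable (fun x => f |x|) := by
  have hIoi : IntegrableOn (fun x => f |x|) (Ioi 0) :=
    hf.congr_fun (fun x hx => by rw [abs_of_pos hx]) measurableSet_Ioi
  have hIic : IntegrableOn (fun x => f |x|) (Iic 0) := by
    have hneg : MeasurableEmbedding fun x : ℝ => -x := (Homeomorph.neg ℝ).measurableEmbedding
    rw [← Measure.map_neg_eq_self (volume : Measure ℝ), hneg.integrableOn_map_iff]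
    simp_rw [Function.comp_def, abs_neg, neg_preimage, neg_Iic, neg_zero]
    exact (integrableOn_Ici_iff_integrableOn_Ioi (by finiteness)).2 hIoi
  have := hIic.union hIoi
  rwa [Iic_union_Ioi, integrableOn_univ] at this

lemma integrableOn_exp_neg_mul_const_add (c : ℝ) :
    IntegrableOn (fun x : ℝ => exp (-x) * (c + x)) (Ioi 0) := by
  refine IntegrableOn.congr_fun (((integrableOn_exp_neg_Ioi 0).const_mul c).add
    (GammaIntegral_convergent two_pos)) (fun x _ => ?_) measurableSet_Ioi
  norm_num
  ring

lemma integral_exp_neg_mul_const_add (c : ℝ) :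
    ∫ x in Ioi 0, exp (-x) * (c + x) = c + 1 := by
  have hGamma := Gamma_eq_integral two_pos
  have hGamma_int := GammaIntegral_convergent two_pos
  norm_num at hGamma hGamma_int
  simp_rw [mul_add]
  rw [integral_add ((integrableOn_exp_neg_Ioi 0).mul_const c) hGamma_int, integral_mul_const,
    integral_exp_neg_Ioi_zero, ← hGamma]
  ring

lemma integral_exp_neg_abs_mul_const_add_abs (c : ℝ) :
    ∫ s, exp (-|s|) * (c + |s|) = 2 * c + 2 := by
  rw [integral_comp_abs (f := fun x => exp (-x) * (c + x)), integral_exp_neg_mul_const_add]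
  ring

lemma integrable_max_sub_mul_sqrt (L : ℝ) : Integrable (fun t => max (L - t) 0 * √t) := by
  refine Continuous.integrable_of_hasCompactSupport (by fun_prop) ?_
  refine HasCompactSupport.intro (isCompact_Icc (a := 0) (b := L)) fun t ht => ?_
  rcases not_and_or.1 ht with ht | ht
  · rw [sqrt_eq_zero'.2 (by linarith [not_le.1 ht]), mul_zero]
  · rw [max_eq_right (by linarith [not_le.1 ht]), zero_mul]

lemma integral_sub_mul_sqrt {L : ℝ} (hL : 0 ≤ L) :
    ∫ t in 0..L, (L - t) * √t = 4 / 15 * L ^ (5 / 2 : ℝ) := by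
  have hderiv (x : ℝ) (hx : 0 ≤ x) : HasDerivAt
      (fun t => 2 / 3 * L * t ^ (3 / 2 : ℝ) - 2 / 5 * t ^ (5 / 2 : ℝ)) ((L - x) * √x) x := by
    refine (((hasDerivAt_rpow_const (p := 3 / 2) (by norm_num)).const_mul (2 / 3 * L)).sub
      ((hasDerivAt_rpow_const (p := 5 / 2) (by norm_num)).const_mul (2 / 5))).congr_deriv ?_
    rw [sqrt_eq_rpow, show (5 / 2 - 1 : ℝ) = 1 + 1 / 2 by norm_num, rpow_add' hx (by norm_num),
      rpow_one]
    norm_num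
    ring
  rw [intervalIntegral.integral_eq_sub_of_hasDerivAt
    (fun x hx => hderiv x (by rw [uIcc_of_le hL] at hx; exact hx.1))
    (by apply Continuous.intervalIntegrable; fun_prop)]
  rw [show (5 / 2 : ℝ) = 1 + 3 / 2 by norm_num, rpow_add' hL (by norm_num), rpow_one]
  norm_num
  ring

lemma integral_Ioi_max_sub_mul_sqrt {L : ℝ} (hL : 0 ≤ L) :
    ∫ t in Ioi 0, max (L - t) 0 * √t = 4 / 15 * L ^ (5 / 2 : ℝ) := by
  rw [setIntegral_eq_of_subset_of_forall_sdiff_eq_zero measurableSet_Ioi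
      (show Ioc 0 L ⊆ Ioi 0 from Ioc_subset_Ioi_self)
      fun t ht => by rw [max_eq_right (by grind), zero_mul],
    ← integral_sub_mul_sqrt hL, intervalIntegral.integral_of_le hL]
  exact setIntegral_congr_fun measurableSet_Ioc fun t ht => by rw [max_eq_left (by grind)]

lemma sqrt_le_one_add_abs (t : ℝ) : √t ≤ 1 + |t| :=
  sqrt_le_iff.2 ⟨by positivity, by nlinarith [le_abs_self t, abs_nonneg t]⟩

lemma abs_log_one_add_exp_sub_max_mul_sqrt_le {L : ℝ} (hL : 0 ≤ L) (t : ℝ) :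
    |(log (1 + exp (L - t)) - max (L - t) 0) * √t| ≤ exp (-|t - L|) * (1 + L + |t - L|) := by
  rw [abs_mul, abs_of_nonneg (sqrt_nonneg t)]
  refine mul_le_mul ((abs_log_one_add_exp_sub_max_le _).trans_eq (by rw [abs_sub_comm])) ?_
    (sqrt_nonneg t) (exp_pos _).le
  linarith [sqrt_le_one_add_abs t, abs_of_nonneg hL, abs_sub_abs_le_abs_sub t L]

lemma integrable_exp_neg_abs_sub_mul (L : ℝ) :
    Integrable (fun t => exp (-|t - L|) * (1 + L + |t - L|)) :=
  (IntegrableOn.integrable_comp_abs (integrableOn_exp_neg_mul_const_add (1 + L))).comp_sub_right L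

lemma abs_integral_log_one_add_exp_sub_mul_sqrt_sub_le {L : ℝ} (hL : 0 ≤ L) :
    |(∫ t in Ioi 0, log (1 + exp (L - t)) * √t) - 4 / 15 * L ^ (5 / 2 : ℝ)| ≤
      2 * L + 4 := by
  set r := fun t => (log (1 + exp (L - t)) - max (L - t) 0) * √t
  have hr : Integrable r := (integrable_exp_neg_abs_sub_mul L).mono' (by fun_prop)
    (ae_of_all _ (abs_log_one_add_exp_sub_max_mul_sqrt_le hL))
  have hsplit : (∫ t in Ioi 0, log (1 + exp (L - t)) * √t) - 4 / 15 * L ^ (5 / 2 : ℝ) =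
      ∫ t in Ioi 0, r t := by
    have hf : IntegrableOn (fun t => log (1 + exp (L - t)) * √t) (Ioi 0) :=
      ((integrable_max_sub_mul_sqrt L).add hr).integrableOn.congr_fun
        (fun t _ => by simp only [Pi.add_apply, r]; ring) measurableSet_Ioi
    rw [← integral_Ioi_max_sub_mul_sqrt hL,
      ← integral_sub hf (integrable_max_sub_mul_sqrt L).integrableOn]
    congr 1 with t
    simp only [r]
    ring
  calc |(∫ t in Ioi 0, log (1 + exp (L - t)) * √t) - 4 / 15 * L ^ (5 / 2 : ℝ)|
      ≤ ∫ t in Ioi 0, exp (-|t - L|) * (1 + L + |t - L|) := by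
        rw [hsplit]
        exact norm_integral_le_of_norm_le (integrable_exp_neg_abs_sub_mul L).integrableOn
          (ae_of_all _ fun t => (norm_eq_abs (r t)).trans_le
            (abs_log_one_add_exp_sub_max_mul_sqrt_le hL t))
    _ ≤ ∫ t, exp (-|t - L|) * (1 + L + |t - L|) :=
        setIntegral_le_integral (integrable_exp_neg_abs_sub_mul L)
          (ae_of_all _ fun t => by positivity)
    _ = 2 * L + 4 := by
        rw [integral_sub_right_eq_self (fun s => exp (-|s|) * (1 + L + |s|)),
          integral_exp_neg_abs_mul_const_add_abs]
        ring

lemma tendsto_div_rpow_of_abs_sub_le {F : ℝ → ℝ} {c C p : ℝ} (hp : 1 < p)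
    (hF : ∀ᶠ x in atTop, |F x - c * x ^ p| ≤ C * x) :
    Tendsto (fun x => F x / x ^ p) atTop (𝓝 c) := by
  rw [tendsto_iff_norm_sub_tendsto_zero]
  have hdecay : Tendsto (fun x : ℝ => C * x ^ (1 - p)) atTop (𝓝 0) := by
    have := (tendsto_rpow_neg_atTop (y := p - 1) (by linarith)).const_mul C
    rwa [mul_zero, neg_sub] at this
  refine squeeze_zero' (Eventually.of_forall fun _ => norm_nonneg _) ?_ hdecay
  filter_upwards [hF, eventually_gt_atTop 0] with x hFx hx
  have hxp : 0 < x ^ p := rpow_pos_of_pos hx p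
  calc ‖F x / x ^ p - c‖ = |F x - c * x ^ p| / x ^ p := by
        rw [norm_eq_abs, ← abs_of_pos hxp, ← abs_div, abs_of_pos hxp, sub_div,
          mul_div_cancel_right₀ _ hxp.ne']
    _ ≤ C * x / x ^ p := by gcongr
    _ = C * x ^ (1 - p) := by rw [rpow_sub hx, rpow_one, mul_div_assoc]

lemma tendsto_integral_log_one_add_exp_sub_mul_sqrt_div_rpow :
    Tendsto (fun L => (∫ t in Ioi 0, log (1 + exp (L - t)) * √t) / L ^ (5 / 2 : ℝ)) atTop
      (𝓝 (4 / 15)) := by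
  refine tendsto_div_rpow_of_abs_sub_le (C := 6) (by norm_num) ?_
  filter_upwards [eventually_ge_atTop 1] with L hL
  linarith [abs_integral_log_one_add_exp_sub_mul_sqrt_sub_le (zero_le_one.trans hL)]

lemma integral_Iic_log_one_add_mul_exp_mul {z : ℝ} (hz : 0 < z) :
    ∫ a in Iic 0, log (1 + z * exp a) * (√(-a) / (2 * π)) =
      (∫ t in Ioi 0, log (1 + exp (log z - t)) * √t) / (2 * π) := by
  have hreflect := integral_comp_neg_Iic 0 fun t => log (1 + exp (log z - t)) * √t / (2 * π)
  rw [neg_zero] at hreflect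
  rw [← integral_div, ← hreflect]
  congr 1 with a
  rw [sub_neg_eq_add, exp_add, exp_log hz, mul_div_assoc]

/-- With ρ(a) = √(-a)/(2π) and Ψ(z) = ∫_{-∞}^0 log(1 + z e^a) ρ(a) da,
one has Ψ(z)/(log z)^{5/2} → 2/(15π) as z → ∞. -/
theorem psi_left_asymptotics :
    Tendsto
      (fun z : ℝ =>
        (∫ a in Iic (0:ℝ), Real.log (1 + z * Real.exp a) * (Real.sqrt (-a) / (2 * π))) /
          (Real.log z) ^ ((5:ℝ)/2))
      atTop (nhds (2 / (15 * π))) := by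
  have h := (tendsto_integral_log_one_add_exp_sub_mul_sqrt_div_rpow.comp
    tendsto_log_atTop).div_const (2 * π)
  rw [show (4 / 15 : ℝ) / (2 * π) = 2 / (15 * π) by field_simp; ring] at h
  refine h.congr' ?_
  filter_upwards [eventually_gt_atTop 0] with z hz
  rw [Function.comp_apply, integral_Iic_log_one_add_mul_exp_mul hz, div_right_comm]
end
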